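/- arXiv:math/0410611 — 3 statements merged into one kernel-verified Lean document; each statement's English description precedes it below -/
import Mathlib

section
/- Fix integers m ≥ 1 and d ≥ 1, and a subset Γ ⊆ ℕ. Define the formal power series η(t) = Σ_{k∈Γ} t^{⌈k/d⌉} and χ(t) = Σ_{k∈Γ} t^{⌈mk/d⌉}, and set ψ(t) := χ(t)·(1−t^m)/(1−t) = χ(t)·(1 + t + ⋯ + t^{m−1}). Then η(t^m) = (1/m)·Σ_{ξ^m = 1} ψ(ξt), where the sum is over all m-th roots of unity ξ. -/
open PowerSeries

/-!
Averaging `ψ(ξt)` over the `m`-th roots of unity kills every coefficient of `ψ` outside the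
multiples of `m`, since `∑_ξ ξ^N` is `m` or `0` according as `m ∣ N`. The coefficient of
`t^{mq}` in `ψ = χ·(1 + ⋯ + t^{m-1})` counts the `k ∈ Γ` with `⌈mk/d⌉ ∈ (mq - m, mq]`, i.e. with
`⌈⌈mk/d⌉/m⌉ = q`; and nested ceilings collapse, `⌈⌈mk/d⌉/m⌉ = ⌈k/d⌉`, which is the count giving
the coefficient of `t^q` in `η`.
-/

namespace Nat

theorem mul_ceilDiv_ceilDiv {m d : ℕ} (hm : 0 < m) (hd : 0 < d) (k : ℕ) :
    (m * k) ⌈/⌉ d ⌈/⌉ m = k ⌈/⌉ d :=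
  eq_of_forall_ge_iff fun x => by
    rw [ceilDiv_le_iff_le_mul hm, ceilDiv_le_iff_le_mul hd, ceilDiv_le_iff_le_mul hd,
      mul_left_comm, Nat.mul_le_mul_left_iff hm]

theorem ceilDiv_eq_iff_mem_Ico {m : ℕ} (hm : 0 < m) (n q : ℕ) :
    n ⌈/⌉ m = q ↔ n ∈ Finset.Ico (m * q + 1 - m) (m * q + 1) := by
  rw [Finset.mem_Ico, Nat.lt_add_one_iff, ← ceilDiv_le_iff_le_mul hm, le_antisymm_iff,
    and_comm, and_congr_left_iff]
  intro _
  rcases q with _ | p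
  · omega
  · rw [Nat.add_one_le_iff, ← not_le, ceilDiv_le_iff_le_mul hm, mul_add_one]
    omega

theorem card_eq_sum_card_fiberwise {α β : Type*} [DecidableEq β] {s : Set α} {f : α → β}
    {t : Finset β} (hs : (s ∩ f ⁻¹' t).Finite) :
    Nat.card {x // x ∈ s ∧ f x ∈ t} = ∑ b ∈ t, Nat.card {x // x ∈ s ∧ f x = b} := by
  have htotal : Nat.card {x // x ∈ s ∧ f x ∈ t} = hs.toFinset.card := by
    rw [← Nat.card_eq_finsetCard]
    exact Nat.card_congr (Equiv.subtypeEquivRight fun x => by simp)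
  have hfiber (b : β) (hb : b ∈ t) :
      Nat.card {x // x ∈ s ∧ f x = b} = (hs.toFinset.filter (f · = b)).card := by
    rw [← Nat.card_eq_finsetCard]
    exact Nat.card_congr (Equiv.subtypeEquivRight fun x => by aesop)
  rw [htotal, Finset.card_eq_sum_card_fiberwise (f := f) (t := t) fun x hx => by simp_all,
    Finset.sum_congr rfl hfiber]

end Nat

theorem IsPrimitiveRoot.sum_nthRoots_one_pow {R : Type*} [CommRing R] [IsDomain R] {ζ : R}
    {m : ℕ} (hζ : IsPrimitiveRoot ζ m) (N : ℕ) :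
    ((Polynomial.nthRoots m (1 : R)).map (· ^ N)).sum = if m ∣ N then (m : R) else 0 := by
  have hgeom : ((Multiset.range m).map ((· ^ N) ∘ (ζ ^ · * 1))).sum =
      ∑ i ∈ Finset.range m, (ζ ^ N) ^ i := by
    simp [Finset.sum, ← pow_mul, mul_comm]
  rw [hζ.nthRoots_eq (one_pow m), Multiset.map_map, hgeom]
  split_ifs with hdvd
  · simp [(hζ.pow_eq_one_iff_dvd N).mpr hdvd]
  · have hne : ζ ^ N - 1 ≠ 0 := sub_ne_zero.mpr fun h => hdvd ((hζ.pow_eq_one_iff_dvd N).mp h)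
    apply (mul_left_inj' hne).mp
    rw [geom_sum_mul, ← pow_mul, mul_comm, pow_mul, hζ.pow_eq_one, one_pow, sub_self, zero_mul]

theorem PowerSeries.coeff_mul_geom_sum_X {R : Type*} [Semiring R] (φ : R⟦X⟧) (m N : ℕ) :
    coeff N (φ * ∑ j ∈ Finset.range m, X ^ j) =
      ∑ n ∈ Finset.Ico (N + 1 - m) (N + 1), coeff n φ := by
  have hrange : (Finset.range m).filter (· ≤ N) = Finset.Ico 0 (min m (N + 1)) := by
    ext j
    simp only [Finset.mem_filter, Finset.mem_range, Finset.mem_Ico]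
    omega
  have hbot : N + 1 - min m (N + 1) = N + 1 - m := by omega
  rw [Finset.mul_sum, map_sum]
  simp_rw [coeff_mul_X_pow']
  rw [← Finset.sum_filter, hrange,
    Finset.sum_Ico_reflect (fun n => coeff n φ) _ (min_le_right _ _), hbot, Nat.sub_zero]

theorem card_ceilDiv_eq_sum_card_mul_ceilDiv {m d : ℕ} (hm : 0 < m) (hd : 0 < d) (Γ : Set ℕ)
    (q : ℕ) :
    Nat.card {k // k ∈ Γ ∧ k ⌈/⌉ d = q} =
      ∑ n ∈ Finset.Ico (m * q + 1 - m) (m * q + 1),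
        Nat.card {k // k ∈ Γ ∧ (m * k) ⌈/⌉ d = n} := by
  have hfiber (k : ℕ) :
      k ⌈/⌉ d = q ↔ (m * k) ⌈/⌉ d ∈ Finset.Ico (m * q + 1 - m) (m * q + 1) := by
    rw [← Nat.ceilDiv_eq_iff_mem_Ico hm, Nat.mul_ceilDiv_ceilDiv hm hd]
  have hfinite :
      (Γ ∩ (fun k => (m * k) ⌈/⌉ d) ⁻¹' ↑(Finset.Ico (m * q + 1 - m) (m * q + 1))).Finite :=
    (Set.finite_Iic (d * q)).subset fun k hk =>
      (ceilDiv_le_iff_le_mul hd).mp ((hfiber k).mpr hk.2).le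
  rw [← Nat.card_eq_sum_card_fiberwise hfinite]
  exact Nat.card_congr (Equiv.subtypeEquivRight fun k => and_congr_right' (hfiber k))

/-- For `m, d ≥ 1` and `Γ ⊆ ℕ`, with `η(t) = Σ_{k∈Γ} t^{⌈k/d⌉}`,
`χ(t) = Σ_{k∈Γ} t^{⌈mk/d⌉}` and `ψ(t) = χ(t)·(1 + t + ⋯ + t^{m−1})`, one has
`η(t^m) = (1/m)·Σ_{ξ^m=1} ψ(ξt)` (stated coefficientwise: the `N`-th coefficient of
`η(t^m)` is `coeff_{N/m} η` if `m ∣ N` and `0` otherwise, while the `N`-th coefficient of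
`ψ(ξt)` is `ξ^N · coeff_N ψ`).  Here `⌈k/d⌉ = (k+d−1)/d` in natural division. -/
theorem eta_of_tm_eq_avg_psi (m d : ℕ) (hm : 1 ≤ m) (hd : 1 ≤ d) (Γ : Set ℕ)
    (η χ ψ : PowerSeries ℂ)
    (hη : η = PowerSeries.mk fun N => (Nat.card {k : ℕ // k ∈ Γ ∧ (k + d - 1) / d = N} : ℂ))
    (hχ : χ = PowerSeries.mk fun N => (Nat.card {k : ℕ // k ∈ Γ ∧ (m * k + d - 1) / d = N} : ℂ))
    (hψ : ψ = χ * ∑ j ∈ Finset.range m, (PowerSeries.X : PowerSeries ℂ) ^ j) :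
    ∀ N : ℕ,
      (if m ∣ N then PowerSeries.coeff (N / m) η else 0) =
        (m : ℂ)⁻¹ *
          ((Polynomial.nthRoots m (1 : ℂ)).map fun ξ => ξ ^ N * PowerSeries.coeff N ψ).sum := by
  intro N
  have hm0 : (m : ℂ) ≠ 0 := Nat.cast_ne_zero.mpr (by omega)
  rw [Multiset.sum_map_mul_right,
    (Complex.isPrimitiveRoot_exp m (by omega)).sum_nthRoots_one_pow N]
  split_ifs with hdvd
  · obtain ⟨q, rfl⟩ := hdvd
    rw [inv_mul_cancel_left₀ hm0, Nat.mul_div_cancel_left q hm, hψ, coeff_mul_geom_sum_X, hη,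
      coeff_mk]
    simp_rw [hχ, coeff_mk]
    exact_mod_cast card_ceilDiv_eq_sum_card_mul_ceilDiv hm hd Γ q
  · simp
end

section
/- Let d ≥ 4 be even and Γ = ⟨d/2, 2d−1⟩ the numerical semigroup generated by d/2 and 2d−1. Then for every l ≥ 0, the number of elements of Γ in the interval ((l−1)d, ld] equals min{l+1, d}. -/
/-- For even `d ≥ 4` and `Γ = ⟨d/2, 2d−1⟩`: for every `l ≥ 0` the number of elements of
`Γ` in `((l−1)d, ld]` equals `min(l+1, d)`. -/
theorem distribution_case_b (d : ℕ) (hd : 4 ≤ d) (heven : Even d) (l : ℕ) :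
    Nat.card {k : ℕ // (∃ i j : ℕ, k = i * (d / 2) + j * (2 * d - 1)) ∧
      ((l : ℤ) - 1) * d < (k : ℤ) ∧ (k : ℤ) ≤ (l : ℤ) * d} = min (l + 1) d := by
  obtain ⟨m, hm⟩ := heven
  have hm2 : d = 2 * m := by omega
  have hmpos : 2 ≤ m := by omega
  have hdm : d / 2 = m := by omega
  have key : ∀ x : ℕ, x * (2 * d - 1) + x = x * (4 * m) := by
    intro x
    have h1 : (2 * d - 1) + 1 = 4 * m := by omega
    calc x * (2 * d - 1) + x = x * ((2 * d - 1) + 1) := by ring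
      _ = x * (4 * m) := by rw [h1]
  set T : Finset ℕ :=
    (Finset.range (2 * m)).filter (fun t => 4 * (t % m) + t / m ≤ 2 * l) with hT
  -- every element of T is at most d * l
  have hTle : ∀ t ∈ T, t ≤ d * l := by
    intro t ht
    rw [hT, Finset.mem_filter, Finset.mem_range] at ht
    obtain ⟨ht2m, hcond⟩ := ht
    have htsplit : m * (t / m) + t % m = t := Nat.div_add_mod t m
    have hj4 : t % m ≤ (t % m) * (4 * m) := Nat.le_mul_of_pos_right _ (by omega)
    calc t = m * (t / m) + t % m := htsplit.symm
      _ ≤ m * (t / m) + (t % m) * (4 * m) := Nat.add_le_add_left hj4 _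
      _ = m * (4 * (t % m) + t / m) := by ring
      _ ≤ m * (2 * l) := Nat.mul_le_mul_left m hcond
      _ = d * l := by rw [hm2]; ring
  -- the set in question is the image of T under t ↦ d*l − t
  have hset : {k : ℕ | (∃ i j : ℕ, k = i * (d / 2) + j * (2 * d - 1)) ∧
      ((l : ℤ) - 1) * d < (k : ℤ) ∧ (k : ℤ) ≤ (l : ℤ) * d}
      = ↑(T.image (fun t => d * l - t)) := by
    ext k
    simp only [Set.mem_setOf_eq, Finset.coe_image, Set.mem_image, Finset.mem_coe, hT,
      Finset.mem_filter, Finset.mem_range]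
    constructor
    · rintro ⟨⟨i, j', hk⟩, h1, h2⟩
      have hkle : k ≤ d * l := by
        have : (k : ℤ) ≤ ((d * l : ℕ) : ℤ) := by push_cast; linarith
        exact_mod_cast this
      set t := d * l - k with htdef
      have htk : k + t = d * l := by omega
      have htkz : (k : ℤ) + (t : ℤ) = (d : ℤ) * l := by exact_mod_cast congrArg (Nat.cast (R := ℤ)) htk
      have ht2m : t < 2 * m := by
        have hdz : (d : ℤ) = 2 * m := by exact_mod_cast hm2
        have : (t : ℤ) < 2 * m := by nlinarith [h1]
        exact_mod_cast this
      refine ⟨t, ⟨ht2m, ?_⟩, by omega⟩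
      set j := t % m with hj
      set ε := t / m with hε
      have htsplit : m * ε + j = t := Nat.div_add_mod t m
      have hdvd1 : m ∣ k + j' := by
        refine ⟨i + 4 * j', ?_⟩
        calc k + j' = i * (d / 2) + j' * (2 * d - 1) + j' := by rw [hk]
          _ = i * m + (j' * (2 * d - 1) + j') := by rw [hdm]; ring
          _ = i * m + j' * (4 * m) := by rw [key j']
          _ = m * (i + 4 * j') := by ring
      have hdvd2 : m ∣ k + t := by
        refine ⟨2 * l, ?_⟩
        rw [htk, hm2]; ring
      have hmeq : j' % m = j := by
        obtain ⟨a, ha⟩ := hdvd1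
        obtain ⟨b, hb⟩ := hdvd2
        have e1 : (k + j') % m = 0 := by simp [ha]
        have e2 : (k + t) % m = 0 := by simp [hb]
        have hME : j' ≡ t [MOD m] := Nat.ModEq.add_left_cancel' k (e1.trans e2.symm)
        exact hME
      have hjj' : j ≤ j' := by rw [← hmeq]; exact Nat.mod_le _ _
      have hk4 : j * (2 * d - 1) ≤ k := by
        rw [hk]
        calc j * (2 * d - 1) ≤ j' * (2 * d - 1) := Nat.mul_le_mul_right _ hjj'
          _ ≤ i * (d / 2) + j' * (2 * d - 1) := Nat.le_add_left _ _
      have hmain : m * (4 * j + ε) ≤ m * (2 * l) := by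
        calc m * (4 * j + ε) = j * (4 * m) + m * ε := by ring
          _ = (j * (2 * d - 1) + j) + m * ε := by rw [key j]
          _ = j * (2 * d - 1) + t := by rw [← htsplit]; ring
          _ ≤ k + t := Nat.add_le_add_right hk4 t
          _ = m * (2 * l) := by rw [htk, hm2]; ring
      exact Nat.le_of_mul_le_mul_left hmain (by omega)
    · rintro ⟨t, ⟨ht2m, hcond⟩, rfl⟩
      set j := t % m with hj
      set ε := t / m with hε
      have htsplit : m * ε + j = t := Nat.div_add_mod t m
      have htle : t ≤ d * l := by
        have hj4 : j ≤ j * (4 * m) := Nat.le_mul_of_pos_right _ (by omega)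
        calc t = m * ε + j := htsplit.symm
          _ ≤ m * ε + j * (4 * m) := Nat.add_le_add_left hj4 _
          _ = m * (4 * j + ε) := by ring
          _ ≤ m * (2 * l) := Nat.mul_le_mul_left m hcond
          _ = d * l := by rw [hm2]; ring
      refine ⟨⟨2 * l - (4 * j + ε), j, ?_⟩, ?_, ?_⟩
      · set i := 2 * l - (4 * j + ε) with hidef
        have hie : i + 4 * j + ε = 2 * l := by omega
        have H : i * (d / 2) + j * (2 * d - 1) + t = d * l := by
          calc i * (d / 2) + j * (2 * d - 1) + t
              = i * m + ((j * (2 * d - 1) + j) + m * ε) := by rw [hdm, ← htsplit]; ring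
            _ = i * m + (j * (4 * m) + m * ε) := by rw [key j]
            _ = m * (i + 4 * j + ε) := by ring
            _ = m * (2 * l) := by rw [hie]
            _ = d * l := by rw [hm2]; ring
        rw [← H, Nat.add_sub_cancel]
      · have hz : ((d * l - t : ℕ) : ℤ) = (d : ℤ) * l - t := by
          rw [Nat.cast_sub htle]; push_cast; ring
        rw [hz]
        have h1 : (t : ℤ) < 2 * m := by exact_mod_cast ht2m
        have hdz : (d : ℤ) = 2 * m := by exact_mod_cast hm2
        nlinarith
      · have hz : ((d * l - t : ℕ) : ℤ) = (d : ℤ) * l - t := by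
          rw [Nat.cast_sub htle]; push_cast; ring
        rw [hz]
        have h0 : (0 : ℤ) ≤ t := by positivity
        nlinarith
  -- injectivity of t ↦ d*l − t on T
  have hinj : Set.InjOn (fun t => d * l - t) ↑T := by
    intro a ha b hb hab
    have h1 := hTle a (by exact_mod_cast ha)
    have h2 := hTle b (by exact_mod_cast hb)
    simp only at hab
    zify [h1, h2] at hab
    omega
  -- cardinality of T
  have hTcard : T.card = min (l + 1) (2 * m) := by
    have hunion : T = Finset.range (min (l / 2 + 1) m) ∪
        Finset.Ico m (m + min ((l + 1) / 2) m) := by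
      ext t
      rw [hT]
      simp only [Finset.mem_filter, Finset.mem_range, Finset.mem_union, Finset.mem_Ico]
      rcases Nat.lt_or_ge t m with h | h
      · rw [Nat.mod_eq_of_lt h, Nat.div_eq_of_lt h]
        omega
      · obtain ⟨s, rfl⟩ := Nat.exists_eq_add_of_le h
        rcases Nat.lt_or_ge s m with hs | hs
        · rw [Nat.add_mod_left, Nat.mod_eq_of_lt hs, Nat.add_comm m s,
            Nat.add_div_right _ (by omega : 0 < m), Nat.div_eq_of_lt hs]
          omega
        · constructor
          · rintro ⟨h1, -⟩; omega
          · rintro (h1 | ⟨-, h2⟩) <;> omega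
    have hdisj : Disjoint (Finset.range (min (l / 2 + 1) m))
        (Finset.Ico m (m + min ((l + 1) / 2) m)) := by
      rw [Finset.disjoint_left]
      intro t ht ht'
      rw [Finset.mem_range] at ht
      rw [Finset.mem_Ico] at ht'
      omega
    rw [hunion, Finset.card_union_of_disjoint hdisj, Finset.card_range, Nat.card_Ico]
    omega
  have hcoe : Nat.card {k : ℕ // (∃ i j : ℕ, k = i * (d / 2) + j * (2 * d - 1)) ∧
      ((l : ℤ) - 1) * d < (k : ℤ) ∧ (k : ℤ) ≤ (l : ℤ) * d}
      = ({k : ℕ | (∃ i j : ℕ, k = i * (d / 2) + j * (2 * d - 1)) ∧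
      ((l : ℤ) - 1) * d < (k : ℤ) ∧ (k : ℤ) ≤ (l : ℤ) * d} : Set ℕ).ncard :=
    Nat.card_coe_set_eq _
  rw [hcoe, hset, Set.ncard_coe_finset, Finset.card_image_of_injOn hinj, hTcard]
  omega
end

section
/- Let j ≥ 5 be odd, let a = φ_{j−2}, b = φ_{j+2}, d = φ_j (Fibonacci numbers), and let Γ = ⟨a, b⟩ be the numerical semigroup generated by a and b. Then for every l ≥ 0, the number of elements of Γ in the interval ((l−1)d, ld] equals min{l+1, d}. -/
/-!
For `a = φ_{j-2}`, `b = φ_{j+2}`, `d = φ_j` we have `a + b = 3d` and `ab = d² + 1` (Catalan).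
An element of `Γ = ⟨a, b⟩` below `ab` is either a multiple of `a` or of `b`, or exceeds an element
of `Γ` by exactly `a + b = 3d`, and never both. Hence the count `N(l)` of `Γ ∩ ((l-1)d, ld]`
satisfies `N(l + 3) = M(l + 3) + N(l)`, where `M(l)` counts the multiples of `a` or `b` in the
window. Since `ld/a + ld/b = 3l - 3l/(d² + 1)`, the floors give `⌊ld/a⌋ + ⌊ld/b⌋ = 3l - 1` for
`0 < l < d`, so `M(l) = min (l + 1) 3` and `N(l) = l + 1` for `l ≤ d - 2`. For `l ≥ d - 1` the
window lies above the Frobenius number `ab - a - b`, so `N(l) = d`.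
-/

open Finset

namespace Nat

theorem fib_add_fib_add_four (n : ℕ) : fib n + fib (n + 4) = 3 * fib (n + 2) := by
  have h2 : fib (n + 2) = fib n + fib (n + 1) := fib_add_two
  have h3 : fib (n + 3) = fib (n + 1) + fib (n + 2) := fib_add_two
  have h4 : fib (n + 4) = fib (n + 2) + fib (n + 3) := fib_add_two
  omega

theorem fib_mul_fib_add_four_of_odd {n : ℕ} (hn : Odd n) :
    fib n * fib (n + 4) = fib (n + 2) ^ 2 + 1 := by
  have catalan := Int.fib_add_sq_sub_fib_mul_fib_add_two_mul n 2
  have hsign : (-1 : ℤ) ^ (n : ℤ).natAbs = -1 := by simpa using hn.neg_one_pow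
  rw [show (n : ℤ) + 2 = ((n + 2 : ℕ) : ℤ) by push_cast; ring,
    show (n : ℤ) + 2 * 2 = ((n + 4 : ℕ) : ℤ) by push_cast; ring, hsign] at catalan
  simp only [Int.fib_natCast, Int.fib_two] at catalan
  zify
  linear_combination -catalan

theorem coprime_fib_fib_add_four {n : ℕ} (hn : Odd n) : Coprime (fib n) (fib (n + 4)) := by
  have hcop : Coprime n (n + 4) :=
    coprime_self_add_right.mpr (by simpa using (Odd.coprime_two_right hn).pow_right 2)
  rw [Coprime, ← fib_gcd, hcop.gcd_eq_one, fib_one]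

variable {a b d : ℕ}

theorem mem_closure_pair_iff_exists_mul {k : ℕ} :
    k ∈ AddSubmonoid.closure ({a, b} : Set ℕ) ↔ ∃ i m : ℕ, k = i * a + m * b := by
  simp only [AddSubmonoid.mem_closure_pair, smul_eq_mul, eq_comm]

theorem mem_closure_pair_iff_dvd_or_sub_mem {k : ℕ} :
    k ∈ AddSubmonoid.closure ({a, b} : Set ℕ) ↔
      a ∣ k ∨ b ∣ k ∨ (a + b ≤ k ∧ k - (a + b) ∈ AddSubmonoid.closure ({a, b} : Set ℕ)) := by
  simp only [mem_closure_pair_iff_exists_mul]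
  constructor
  · rintro ⟨_ | i, _ | m, rfl⟩
    · simp
    · exact Or.inr (Or.inl (Dvd.intro_left (m + 1) (by ring)))
    · exact Or.inl (Dvd.intro_left (i + 1) (by ring))
    · exact Or.inr (Or.inr ⟨by nlinarith, i, m, by rw [add_mul, add_mul]; omega⟩)
  · rintro (⟨i, rfl⟩ | ⟨m, rfl⟩ | ⟨hle, i, m, hk⟩)
    · exact ⟨i, 0, by ring⟩
    · exact ⟨0, m, by ring⟩
    · exact ⟨i + 1, m + 1, by rw [add_mul, add_mul]; omega⟩

theorem mul_le_of_mem_closure_pair_of_dvd_add (hab : Coprime a b) {k : ℕ}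
    (hk : k ∈ AddSubmonoid.closure ({a, b} : Set ℕ)) (hdvd : a ∣ k + (a + b)) :
    a * b ≤ k + (a + b) := by
  obtain ⟨i, m, rfl⟩ := mem_closure_pair_iff_exists_mul.mp hk
  have hsplit : i * a + m * b + (a + b) = (i + 1) * a + (m + 1) * b := by ring
  rw [hsplit] at hdvd ⊢
  have hm : a ∣ m + 1 :=
    hab.dvd_of_dvd_mul_right ((Nat.dvd_add_right (dvd_mul_left a (i + 1))).mp hdvd)
  have hma : a * b ≤ (m + 1) * b := Nat.mul_le_mul_right b (Nat.le_of_dvd (by omega) hm)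
  omega

theorem not_dvd_or_dvd_of_sub_mem_closure_pair (hab : Coprime a b) {k : ℕ} (hk : k < a * b) (hle : a + b ≤ k)
    (hmem : k - (a + b) ∈ AddSubmonoid.closure ({a, b} : Set ℕ)) : ¬(a ∣ k ∨ b ∣ k) := by
  have hk' : k - (a + b) + (a + b) = k := Nat.sub_add_cancel hle
  rintro (hdvd | hdvd)
  · have := mul_le_of_mem_closure_pair_of_dvd_add hab hmem (by rwa [hk'])
    omega
  · rw [Set.pair_comm] at hmem
    have := mul_le_of_mem_closure_pair_of_dvd_add hab.symm hmem (by rwa [add_comm b, hk'])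
    rw [mul_comm] at this
    omega

open scoped Classical

theorem count_closure_pair_eq (hab : Coprime a b) {n : ℕ} (hn : n ≤ a * b) :
    count (· ∈ AddSubmonoid.closure ({a, b} : Set ℕ)) n =
      count (fun k ↦ a ∣ k ∨ b ∣ k) n +
        count (· ∈ AddSubmonoid.closure ({a, b} : Set ℕ)) (n - (a + b)) := by
  induction n with
  | zero => simp
  | succ n ih =>
    have hshift : count (· ∈ AddSubmonoid.closure ({a, b} : Set ℕ)) (n + 1 - (a + b)) =
        count (· ∈ AddSubmonoid.closure ({a, b} : Set ℕ)) (n - (a + b)) +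
          if a + b ≤ n ∧ n - (a + b) ∈ AddSubmonoid.closure ({a, b} : Set ℕ) then 1 else 0 := by
      by_cases hle : a + b ≤ n
      · rw [show n + 1 - (a + b) = n - (a + b) + 1 by omega, count_succ]
        simp [hle]
      · simp [hle, show n + 1 - (a + b) = n - (a + b) by omega]
    have hdisj := not_dvd_or_dvd_of_sub_mem_closure_pair hab (k := n) (by omega)
    rw [count_succ, count_succ, ih (by omega), hshift, mem_closure_pair_iff_dvd_or_sub_mem]
    split_ifs <;> simp_all <;> omega

theorem count_dvd_or_dvd (hab : Coprime a b) {n : ℕ} (hn : n < a * b) :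
    count (fun k ↦ a ∣ k ∨ b ∣ k) (n + 1) = n / a + n / b + 1 := by
  induction n with
  | zero => simp [count_one]
  | succ n ih =>
    have hboth : ¬(a ∣ n + 1 ∧ b ∣ n + 1) := fun ⟨ha, hb⟩ ↦
      absurd (Nat.le_of_dvd (by omega) (hab.mul_dvd_of_dvd_of_dvd ha hb)) (by omega)
    rw [count_succ, ih (by omega), Nat.succ_div, Nat.succ_div]
    split_ifs <;> simp_all <;> omega

/-- At `l = 0` the subtraction `l * d + 1 - d` truncates to `0`, so the window is `{0}`, matching
`(-d, 0]`. -/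
def windowCount (p : ℕ → Prop) [DecidablePred p] (d l : ℕ) : ℕ :=
  count p (l * d + 1) - count p (l * d + 1 - d)

theorem natCard_window_eq_windowCount (p : ℕ → Prop) [DecidablePred p] (d l : ℕ) :
    Nat.card {k : ℕ // p k ∧ ((l : ℤ) - 1) * d < k ∧ (k : ℤ) ≤ l * d} = windowCount p d l := by
  have hbounds (k : ℕ) :
      (((l : ℤ) - 1) * d < k ∧ (k : ℤ) ≤ l * d) ↔ l * d + 1 - d ≤ k ∧ k < l * d + 1 := by
    have hcast : ((l * d : ℕ) : ℤ) = l * d := by push_cast; rfl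
    rw [sub_mul, one_mul]
    omega
  have hsub : {k ∈ range (l * d + 1 - d) | p k} ⊆ {k ∈ range (l * d + 1) | p k} :=
    filter_subset_filter p (range_subset_range.mpr (by omega))
  rw [windowCount, count_eq_card_filter_range, count_eq_card_filter_range,
    ← card_sdiff_of_subset hsub, ← Nat.card_eq_finsetCard]
  refine Nat.card_congr (Equiv.subtypeEquivRight fun k ↦ ?_)
  simp only [hbounds, mem_sdiff, mem_filter, mem_range]
  by_cases hp : p k <;> simp [hp]
  omega

theorem div_add_div_add_one_eq (hsum : a + b = 3 * d) (hprod : a * b = d ^ 2 + 1)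
    {l : ℕ} (hl : 0 < l) (hld : l < d) : l * d / a + l * d / b + 1 = 3 * l := by
  have ha : 0 < a := Nat.pos_of_ne_zero (by rintro rfl; simp at hprod)
  have hb : 0 < b := Nat.pos_of_ne_zero (by rintro rfl; simp at hprod)
  have h1 := Nat.div_add_mod (l * d) a
  have h2 := Nat.div_add_mod (l * d) b
  have hr : l * d % a < a := Nat.mod_lt _ ha
  have hs : l * d % b < b := Nat.mod_lt _ hb
  generalize l * d / a = q₁ at *
  generalize l * d / b = q₂ at *
  generalize l * d % a = r at *
  generalize l * d % b = s at *
  -- `r / a + s / b + 3 l / (a b)` is the fractional part lost by the two floors; it lies in `(0, 2)`.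
  have hid : a * b * (q₁ + q₂) + (b * r + a * s + 3 * l) = a * b * (3 * l) := by
    zify at h1 h2 hsum hprod ⊢
    linear_combination b * h1 + a * h2 + l * d * hsum - 3 * l * hprod
  have hr' : b * (r + 1) ≤ b * a := Nat.mul_le_mul_left b hr
  have hs' : a * (s + 1) ≤ a * b := Nat.mul_le_mul_left a hs
  have hlt : q₁ + q₂ < 3 * l := by
    refine Nat.lt_of_mul_lt_mul_left (a := a * b) ?_
    omega
  have hgt : 3 * l < q₁ + q₂ + 2 := by
    refine Nat.lt_of_mul_lt_mul_left (a := a * b) ?_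
    rw [mul_comm b a] at hr'
    nlinarith
  omega

theorem count_dvd_or_dvd_mul_add_one (hsum : a + b = 3 * d) (hprod : a * b = d ^ 2 + 1)
    (hab : Coprime a b) {l : ℕ} (hl : 0 < l) (hld : l < d) :
    count (fun k ↦ a ∣ k ∨ b ∣ k) (l * d + 1) = 3 * l := by
  have hlt : l * d < a * b := by
    have := Nat.mul_le_mul_right d hld.le
    rw [hprod, sq]
    omega
  rw [count_dvd_or_dvd hab hlt, div_add_div_add_one_eq hsum hprod hl hld]

theorem windowCount_dvd_or_dvd (hsum : a + b = 3 * d) (hprod : a * b = d ^ 2 + 1)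
    (hab : Coprime a b) {l : ℕ} (hld : l < d) :
    windowCount (fun k ↦ a ∣ k ∨ b ∣ k) d l = min (l + 1) 3 := by
  have hone : count (fun k ↦ a ∣ k ∨ b ∣ k) 1 = 1 := by simp [count_one]
  unfold windowCount
  obtain rfl | rfl | hl : l = 0 ∨ l = 1 ∨ 2 ≤ l := by omega
  · simp [hone, show 1 - d = 0 by omega]
  · rw [show 1 * d + 1 - d = 1 by omega, hone,
      count_dvd_or_dvd_mul_add_one hsum hprod hab one_pos hld]
    rfl
  · have hpred : (l - 1) * d = l * d - d := Nat.sub_one_mul l d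
    have hdl : d ≤ l * d := Nat.le_mul_of_pos_left d (by omega)
    rw [show l * d + 1 - d = (l - 1) * d + 1 by omega,
      count_dvd_or_dvd_mul_add_one hsum hprod hab (by omega) hld,
      count_dvd_or_dvd_mul_add_one hsum hprod hab (by omega) (by omega)]
    omega

theorem windowCount_closure_pair_add_three (hsum : a + b = 3 * d) (hprod : a * b = d ^ 2 + 1)
    (hab : Coprime a b) {l : ℕ} (hld : l + 3 ≤ d) :
    windowCount (· ∈ AddSubmonoid.closure {a, b}) d (l + 3) =
      windowCount (fun k ↦ a ∣ k ∨ b ∣ k) d (l + 3) +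
        windowCount (· ∈ AddSubmonoid.closure {a, b}) d l := by
  have hmul : (l + 3) * d = l * d + 3 * d := add_mul l 3 d
  have hle : (l + 3) * d + 1 ≤ a * b := by
    have := Nat.mul_le_mul_right d hld
    rw [hprod, sq]
    omega
  have htop := count_closure_pair_eq hab hle
  have hbot := count_closure_pair_eq hab (n := (l + 3) * d + 1 - d) (by omega)
  rw [hsum, show (l + 3) * d + 1 - 3 * d = l * d + 1 by omega] at htop
  rw [hsum, show (l + 3) * d + 1 - d - 3 * d = l * d + 1 - d by omega] at hbot
  have hmono₁ := count_monotone (fun k ↦ a ∣ k ∨ b ∣ k)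
    (show (l + 3) * d + 1 - d ≤ (l + 3) * d + 1 by omega)
  have hmono₂ := count_monotone (· ∈ AddSubmonoid.closure {a, b})
    (show l * d + 1 - d ≤ l * d + 1 by omega)
  unfold windowCount
  omega

theorem windowCount_closure_pair_of_lt_three (hsum : a + b = 3 * d) (hprod : a * b = d ^ 2 + 1)
    (hab : Coprime a b) {l : ℕ} (hl : l < 3) (hld : l ≤ d) :
    windowCount (· ∈ AddSubmonoid.closure {a, b}) d l =
      windowCount (fun k ↦ a ∣ k ∨ b ∣ k) d l := by
  have hle : l * d + 1 ≤ a * b := by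
    have := Nat.mul_le_mul_right d hld
    rw [hprod, sq]
    omega
  have hd : 0 < d := Nat.pos_of_ne_zero (by rintro rfl; simp_all)
  have hsmall : l * d + 1 ≤ 3 * d := by
    have := Nat.mul_le_mul_right d (show l ≤ 2 by omega)
    omega
  have htop := count_closure_pair_eq hab hle
  have hbot := count_closure_pair_eq hab (n := l * d + 1 - d) (by omega)
  rw [hsum, Nat.sub_eq_zero_of_le hsmall, count_zero] at htop
  rw [hsum, Nat.sub_eq_zero_of_le (show l * d + 1 - d ≤ 3 * d by omega), count_zero] at hbot
  unfold windowCount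
  omega

theorem windowCount_closure_pair_of_add_two_le (hsum : a + b = 3 * d)
    (hprod : a * b = d ^ 2 + 1) (hab : Coprime a b) {l : ℕ} (hld : l + 2 ≤ d) :
    windowCount (· ∈ AddSubmonoid.closure {a, b}) d l = l + 1 := by
  induction l using Nat.strong_induction_on with
  | _ l ih =>
    by_cases hl : l < 3
    · rw [windowCount_closure_pair_of_lt_three hsum hprod hab hl (by omega),
        windowCount_dvd_or_dvd hsum hprod hab (by omega)]
      omega
    · obtain ⟨m, rfl⟩ : ∃ m, l = m + 3 := ⟨l - 3, by omega⟩
      rw [windowCount_closure_pair_add_three hsum hprod hab (by omega),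
        windowCount_dvd_or_dvd hsum hprod hab (by omega), ih m (by omega) (by omega)]
      omega

theorem windowCount_closure_pair_of_le_add_one (hsum : a + b = 3 * d)
    (hprod : a * b = d ^ 2 + 1) (hab : Coprime a b) (ha : 1 < a) (hb : 1 < b) {l : ℕ}
    (hld : d ≤ l + 1) : windowCount (· ∈ AddSubmonoid.closure {a, b}) d l = d := by
  have hfrob := (frobeniusNumber_iff.mp (frobeniusNumber_pair hab ha hb)).2
  have hdd : d * d ≤ l * d + d := by simpa [add_mul] using Nat.mul_le_mul_right d hld
  have hd : 2 * d ≤ d * d := Nat.mul_le_mul_right d (by omega)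
  rw [sq] at hprod
  unfold windowCount
  set m := l * d + 1 - d
  rw [show l * d + 1 = m + d by omega, count_add, Nat.add_sub_cancel_left, count_of_forall]
  intro k _
  exact hfrob _ (by omega)

end Nat

open Nat in
/-- For odd `j ≥ 5`, `a = φ_{j−2}`, `b = φ_{j+2}`, `d = φ_j` and `Γ = ⟨a,b⟩`: for every
`l ≥ 0` the number of elements of `Γ` in `((l−1)d, ld]` equals `min(l+1, d)`. -/
theorem distribution_case_d (j : ℕ) (hj : 5 ≤ j) (hodd : Odd j) (l : ℕ) :
    Nat.card {k : ℕ // (∃ i m : ℕ, k = i * Nat.fib (j - 2) + m * Nat.fib (j + 2)) ∧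
      ((l : ℤ) - 1) * Nat.fib j < (k : ℤ) ∧ (k : ℤ) ≤ (l : ℤ) * Nat.fib j} =
      min (l + 1) (Nat.fib j) := by
  classical
  obtain ⟨n, rfl⟩ : ∃ n, j = n + 2 := ⟨j - 2, by omega⟩
  have hn : Odd n := by simpa [parity_simps] using hodd
  have hsum := fib_add_fib_add_four n
  have hprod := fib_mul_fib_add_four_of_odd hn
  have hab := coprime_fib_fib_add_four hn
  have ha : 1 < fib n := fib_mono (show 3 ≤ n by omega)
  have hb : 1 < fib (n + 4) := fib_mono (show 3 ≤ n + 4 by omega)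
  simp only [Nat.add_sub_cancel, show n + 2 + 2 = n + 4 from rfl,
    ← mem_closure_pair_iff_exists_mul]
  rw [natCard_window_eq_windowCount]
  rcases le_or_gt (l + 2) (fib (n + 2)) with hl | hl
  · rw [windowCount_closure_pair_of_add_two_le hsum hprod hab hl]
    omega
  · rw [windowCount_closure_pair_of_le_add_one hsum hprod hab ha hb (by omega)]
    omega
end
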